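/- Let F : [0,1] → [0,1] be a differentiable cumulative distribution function with F' ∈ C^{α,R} and F'(x) ≥ c > 0 for all x. Then F is invertible, F^{-1} is differentiable with (F^{-1})'(s) = 1/F'(F^{-1}(s)), and (F^{-1})' is α-Hölder continuous on [0,1] with Hölder constant at most R/c^{2+α} (up to a constant factor). -/

import Mathlib

/-!
Since `F' ≥ c > 0`, the mean value theorem gives `c |x - y| ≤ |F x - F y|`, so `F` is injective,
and by the intermediate value theorem it maps `[0,1]` onto `[0,1]`. Its inverse `G` is then
`c⁻¹`-Lipschitz, hence continuous, and the one-variable inverse function rule gives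
`G' = 1 / F' ∘ G`. Finally `|1/a - 1/b| ≤ |a - b| / c²` for `a, b ≥ c`, and composing the
`α`-Hölder function `F'` with the `c⁻¹`-Lipschitz `G` costs a factor `c^{-α}`.
-/

open Set Filter Topology

theorem HasDerivWithinAt.of_local_left_inverse {𝕜 : Type*} [NontriviallyNormedField 𝕜]
    {f g : 𝕜 → 𝕜} {f' a : 𝕜} {s t : Set 𝕜} (hg : Tendsto g (𝓝[s] a) (𝓝[t] (g a)))
    (hf : HasDerivWithinAt f f' t (g a)) (hf' : f' ≠ 0) (ha : a ∈ s)
    (hfg : ∀ᶠ x in 𝓝[s] a, f (g x) = x) : HasDerivWithinAt g f'⁻¹ s a :=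
  HasFDerivWithinAt.of_local_left_inverse
    (f' := ContinuousLinearEquiv.unitsEquivAut 𝕜 (Units.mk0 f' hf')) hg hf ha hfg

section MeanValue

variable {D : Set ℝ} {f f' : ℝ → ℝ} {C : ℝ}

theorem Convex.mul_sub_le_image_sub_of_le_hasDerivWithinAt (hD : Convex ℝ D)
    (hf : ∀ x ∈ D, HasDerivWithinAt f (f' x) D x) (hC : ∀ x ∈ D, C ≤ f' x) :
    ∀ x ∈ D, ∀ y ∈ D, x ≤ y → C * (y - x) ≤ f y - f x := by
  have hfAt : ∀ x ∈ interior D, HasDerivAt f (f' x) x := fun x hx =>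
    (hf x (interior_subset hx)).hasDerivAt (mem_interior_iff_mem_nhds.mp hx)
  refine hD.mul_sub_le_image_sub_of_le_deriv (fun x hx => (hf x hx).continuousWithinAt)
    (fun x hx => (hfAt x hx).differentiableAt.differentiableWithinAt) fun x hx => ?_
  rw [(hfAt x hx).deriv]
  exact hC x (interior_subset hx)

theorem Convex.mul_abs_sub_le_abs_image_sub_of_le_hasDerivWithinAt (hD : Convex ℝ D)
    (hf : ∀ x ∈ D, HasDerivWithinAt f (f' x) D x) (hC : ∀ x ∈ D, C ≤ f' x) :
    ∀ x ∈ D, ∀ y ∈ D, C * |x - y| ≤ |f x - f y| := by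
  have hmono := hD.mul_sub_le_image_sub_of_le_hasDerivWithinAt hf hC
  intro x hx y hy
  rcases le_total x y with hxy | hyx
  · calc C * |x - y| = C * (y - x) := by rw [abs_sub_comm, abs_of_nonneg (sub_nonneg.2 hxy)]
      _ ≤ f y - f x := hmono x hx y hy hxy
      _ ≤ |f x - f y| := abs_sub_comm (f x) (f y) ▸ le_abs_self _
  · calc C * |x - y| = C * (x - y) := by rw [abs_of_nonneg (sub_nonneg.2 hyx)]
      _ ≤ f x - f y := hmono y hy x hx hyx
      _ ≤ |f x - f y| := le_abs_self _

end MeanValue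

section ExpandingMaps

variable {g : ℝ → ℝ} {s : Set ℝ} {c : ℝ}

theorem injOn_of_mul_abs_sub_le (hc : 0 < c) (hg : ∀ x ∈ s, ∀ y ∈ s, c * |x - y| ≤ |g x - g y|) :
    InjOn g s := fun x hx y hy hxy => by
  have := hg x hx y hy
  rw [hxy, sub_self, abs_zero] at this
  exact sub_eq_zero.mp (abs_nonpos_iff.mp (nonpos_of_mul_nonpos_right this hc))

theorem tendsto_nhdsWithin_of_mul_abs_sub_le {t : Set ℝ} {a : ℝ} (hc : 0 < c)
    (hgst : MapsTo g s t) (hg : ∀ x ∈ s, ∀ y ∈ s, c * |g x - g y| ≤ |x - y|) (ha : a ∈ s) :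
    Tendsto g (𝓝[s] a) (𝓝[t] (g a)) := by
  have hlip : LipschitzOnWith (Real.toNNReal c⁻¹) g s :=
    LipschitzOnWith.of_dist_le' fun x hx y hy => by
      rw [Real.dist_eq, Real.dist_eq, inv_mul_eq_div, le_div_iff₀' hc]
      exact hg x hx y hy
  exact (hlip.continuousOn a ha).tendsto_nhdsWithin hgst

end ExpandingMaps

theorem abs_inv_sub_inv_le_div_sq {a b c : ℝ} (hc : 0 < c) (ha : c ≤ a) (hb : c ≤ b) :
    |a⁻¹ - b⁻¹| ≤ |a - b| / c ^ 2 := by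
  have ha0 : 0 < a := hc.trans_le ha
  have hb0 : 0 < b := hc.trans_le hb
  rw [inv_sub_inv ha0.ne' hb0.ne', abs_div, abs_of_pos (mul_pos ha0 hb0), abs_sub_comm, sq]
  gcongr

theorem abs_comp_sub_comp_le_of_holder_of_mul_abs_sub_le {f g : ℝ → ℝ} {s t : Set ℝ}
    {α R c : ℝ} (hα : 0 ≤ α) (hR : 0 ≤ R) (hc : 0 < c)
    (hf : ∀ x ∈ t, ∀ y ∈ t, |f x - f y| ≤ R * |x - y| ^ α) (hgst : MapsTo g s t)
    (hg : ∀ x ∈ s, ∀ y ∈ s, c * |g x - g y| ≤ |x - y|) :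
    ∀ x ∈ s, ∀ y ∈ s, |f (g x) - f (g y)| ≤ R / c ^ α * |x - y| ^ α := by
  intro x hx y hy
  calc |f (g x) - f (g y)| ≤ R * |g x - g y| ^ α := hf _ (hgst hx) _ (hgst hy)
    _ ≤ R * (|x - y| / c) ^ α := by
        gcongr
        rw [le_div_iff₀' hc]
        exact hg x hx y hy
    _ = R / c ^ α * |x - y| ^ α := by
        rw [Real.div_rpow (abs_nonneg _) hc.le]
        ring

theorem inverse_cdf_derivative_holder_general (α R c : ℝ) (hα : 0 < α)
    (hR : 0 < R) (hc : 0 < c) (F F' : ℝ → ℝ)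
    (hderiv : ∀ x ∈ Set.Icc (0 : ℝ) 1, HasDerivWithinAt F (F' x) (Set.Icc 0 1) x)
    (hF0 : F 0 = 0) (hF1 : F 1 = 1)
    (hHolder : ∀ x ∈ Set.Icc (0 : ℝ) 1, ∀ y ∈ Set.Icc (0 : ℝ) 1,
      |F' x - F' y| ≤ R * |x - y| ^ α)
    (hlow : ∀ x ∈ Set.Icc (0 : ℝ) 1, c ≤ F' x) :
    ∃ G : ℝ → ℝ,
      (∀ x ∈ Set.Icc (0 : ℝ) 1, G (F x) = x) ∧
      (∀ s ∈ Set.Icc (0 : ℝ) 1, F (G s) = s) ∧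
      (∀ s ∈ Set.Icc (0 : ℝ) 1, HasDerivWithinAt G (1 / F' (G s)) (Set.Icc 0 1) s) ∧
      ∃ C : ℝ, 0 < C ∧ ∀ s ∈ Set.Icc (0 : ℝ) 1, ∀ t ∈ Set.Icc (0 : ℝ) 1,
        |1 / F' (G s) - 1 / F' (G t)| ≤ C * (R / c ^ (2 + α)) * |s - t| ^ α := by
  have hexpand := (convex_Icc (0 : ℝ) 1).mul_abs_sub_le_abs_image_sub_of_le_hasDerivWithinAt
    hderiv hlow
  have hsurj : SurjOn F (Icc 0 1) (Icc 0 1) := by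
    have hIVT := intermediate_value_Icc zero_le_one fun x hx => (hderiv x hx).continuousWithinAt
    rwa [hF0, hF1] at hIVT
  set G := Function.invFunOn F (Icc 0 1)
  have hGF : LeftInvOn G F (Icc 0 1) := (injOn_of_mul_abs_sub_le hc hexpand).leftInvOn_invFunOn
  have hFG : RightInvOn G F (Icc 0 1) := hsurj.rightInvOn_invFunOn
  have hG : MapsTo G (Icc 0 1) (Icc 0 1) := hsurj.mapsTo_invFunOn
  have hGlip : ∀ s ∈ Icc (0 : ℝ) 1, ∀ t ∈ Icc (0 : ℝ) 1, c * |G s - G t| ≤ |s - t| :=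
    fun s hs t ht => by simpa only [hFG hs, hFG ht] using hexpand _ (hG hs) _ (hG ht)
  refine ⟨G, fun x hx => hGF hx, fun s hs => hFG hs, fun s hs => ?_, 1, one_pos,
    fun s hs t ht => ?_⟩
  · rw [one_div]
    exact (hderiv _ (hG hs)).of_local_left_inverse
      (tendsto_nhdsWithin_of_mul_abs_sub_le hc hG hGlip hs) (hc.trans_le (hlow _ (hG hs))).ne'
      hs (eventually_nhdsWithin_of_forall fun t ht => hFG ht)
  · calc |1 / F' (G s) - 1 / F' (G t)| ≤ |F' (G s) - F' (G t)| / c ^ 2 := by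
          simpa only [one_div] using
            abs_inv_sub_inv_le_div_sq hc (hlow _ (hG hs)) (hlow _ (hG ht))
      _ ≤ R / c ^ α * |s - t| ^ α / c ^ 2 := by
          gcongr
          exact abs_comp_sub_comp_le_of_holder_of_mul_abs_sub_le hα.le hR.le hc hHolder hG
            hGlip s hs t ht
      _ = 1 * (R / c ^ (2 + α)) * |s - t| ^ α := by
          rw [Real.rpow_add hc, Real.rpow_two]
          ring

/-- Let `F : [0,1] → [0,1]` be a differentiable c.d.f. with `F' ∈ C^{α,R}` (sup norm and
`α`-Hölder seminorm bounded by `R`) and `F' ≥ c > 0`. Then `F` is invertible with inverse `G`,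
`G = F⁻¹` is differentiable with `(F⁻¹)'(s) = 1/F'(F⁻¹(s))`, and `(F⁻¹)'` is `α`-Hölder on
`[0,1]` with Hölder constant at most `R/c^{2+α}` up to a constant factor. -/
theorem inverse_cdf_derivative_holder (α R c : ℝ) (hα : 0 < α) (hα1 : α ≤ 1)
    (hR : 0 < R) (hc : 0 < c) (F F' : ℝ → ℝ)
    (hderiv : ∀ x ∈ Set.Icc (0 : ℝ) 1, HasDerivWithinAt F (F' x) (Set.Icc 0 1) x)
    (hF0 : F 0 = 0) (hF1 : F 1 = 1)
    (hsup : ∀ x ∈ Set.Icc (0 : ℝ) 1, |F' x| ≤ R)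
    (hHolder : ∀ x ∈ Set.Icc (0 : ℝ) 1, ∀ y ∈ Set.Icc (0 : ℝ) 1,
      |F' x - F' y| ≤ R * |x - y| ^ α)
    (hlow : ∀ x ∈ Set.Icc (0 : ℝ) 1, c ≤ F' x) :
    ∃ G : ℝ → ℝ,
      (∀ x ∈ Set.Icc (0 : ℝ) 1, G (F x) = x) ∧
      (∀ s ∈ Set.Icc (0 : ℝ) 1, F (G s) = s) ∧
      (∀ s ∈ Set.Icc (0 : ℝ) 1, HasDerivWithinAt G (1 / F' (G s)) (Set.Icc 0 1) s) ∧
      ∃ C : ℝ, 0 < C ∧ ∀ s ∈ Set.Icc (0 : ℝ) 1, ∀ t ∈ Set.Icc (0 : ℝ) 1,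
        |1 / F' (G s) - 1 / F' (G t)| ≤ C * (R / c ^ (2 + α)) * |s - t| ^ α :=
  inverse_cdf_derivative_holder_general α R c hα hR hc F F' hderiv hF0 hF1 hHolder hlow
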